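/- If x and u are distinct codewords of a code C ⊆ F_2^n such that every codeword belongs to a single-deletion-correcting code and every codeword's integral belongs to a code of minimum Hamming distance 3, then B_{T∨D}(x) ∩ B_{T∨D}(u) = ∅, i.e., C corrects a single deletion or a single adjacent transposition. -/
import Mathlib


/-- The set of words obtained from `x` by deleting at most one symbol. -/
def delBall (x : List (ZMod 2)) : Set (List (ZMod 2)) :=
  insert x {y | ∃ i < x.length, y = x.eraseIdx i}

/-- The set of words obtained from `x` by at most one adjacent transposition. -/
def oneT (x : List (ZMod 2)) : Set (List (ZMod 2)) :=
  insert x {y | ∃ (s t : List (ZMod 2)) (a b : ZMod 2),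
    x = s ++ a :: b :: t ∧ y = s ++ b :: a :: t}

/-- The integral (prefix sums mod 2) of a binary word. -/
def listIntegral (x : List (ZMod 2)) : List (ZMod 2) :=
  (List.range x.length).map (fun k => (x.take (k + 1)).sum)

/-- Hamming distance between two words (number of differing positions). -/
def listHam (x u : List (ZMod 2)) : ℕ :=
  (x.zip u).countP (fun p => decide (p.1 ≠ p.2))

lemma listIntegral_length (x : List (ZMod 2)) : (listIntegral x).length = x.length := by
  simp [listIntegral]

lemma listIntegral_cons (a : ZMod 2) (l : List (ZMod 2)) :
    listIntegral (a :: l) = a :: (listIntegral l).map (a + ·) := by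
  simp [listIntegral, List.range_succ_eq_map, List.map_map, Function.comp]

lemma listIntegral_append (s l : List (ZMod 2)) :
    listIntegral (s ++ l) = listIntegral s ++ (listIntegral l).map (s.sum + ·) := by
  induction s with
  | nil => simp [listIntegral]
  | cons a s ih => simp [listIntegral_cons, ih, List.map_map, Function.comp, add_assoc]

lemma listHam_cons (a b : ZMod 2) (x u : List (ZMod 2)) :
    listHam (a :: x) (b :: u) = listHam x u + if a = b then 0 else 1 := by
  by_cases h : a = b <;> simp [listHam, List.countP_cons, h]

lemma listHam_self (x : List (ZMod 2)) : listHam x x = 0 := by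
  induction x with
  | nil => simp [listHam]
  | cons a x ih => simp [listHam_cons, ih]

lemma listHam_comm (x : List (ZMod 2)) : ∀ u, listHam x u = listHam u x := by
  induction x with
  | nil => intro u; cases u <;> simp [listHam]
  | cons a x ih =>
    intro u
    cases u with
    | nil => simp [listHam]
    | cons b u =>
      rw [listHam_cons, listHam_cons, ih]
      congr 1
      by_cases h : a = b <;> simp [h, eq_comm]

lemma listHam_tri : ∀ x y u : List (ZMod 2), x.length = y.length → y.length = u.length →
    listHam x u ≤ listHam x y + listHam y u := by
  intro x
  induction x with
  | nil => intro y u _ _; simp [listHam]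
  | cons a x ih =>
    intro y u h1 h2
    cases y with
    | nil => simp at h1
    | cons b y =>
      cases u with
      | nil => simp at h2
      | cons c u =>
        have key := ih y u (by simpa using h1) (by simpa using h2)
        rw [listHam_cons, listHam_cons, listHam_cons]
        by_cases hab : a = b <;> by_cases hbc : b = c <;> by_cases hac : a = c <;>
          first
          | exact absurd (hab.trans hbc) hac
          | (simp [hab, hbc, hac]; omega)

lemma listHam_single : ∀ (p : List (ZMod 2)) (c d : ZMod 2) (q : List (ZMod 2)),
    listHam (p ++ c :: q) (p ++ d :: q) ≤ 1 := by
  intro p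
  induction p with
  | nil =>
    intro c d q
    simp only [List.nil_append, listHam_cons, listHam_self]
    split <;> omega
  | cons a p ih =>
    intro c d q
    simpa [listHam_cons] using ih c d q
lemma oneT_length {x y : List (ZMod 2)} (h : y ∈ oneT x) : y.length = x.length := by
  rcases h with rfl | ⟨s, t, a, b, rfl, rfl⟩
  · rfl
  · simp

lemma oneT_ham {x y : List (ZMod 2)} (h : y ∈ oneT x) :
    listHam (listIntegral x) (listIntegral y) ≤ 1 := by
  rcases h with rfl | ⟨s, t, a, b, rfl, rfl⟩
  · simp [listHam_self]
  · have hx : listIntegral (s ++ a :: b :: t) =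
        listIntegral s ++ (s.sum + a) ::
          ((s.sum + (a + b)) :: (listIntegral t).map (fun z => s.sum + (a + (b + z)))) := by
      simp [listIntegral_append, listIntegral_cons, List.map_map, Function.comp]
      intro z _; ring
    have hy : listIntegral (s ++ b :: a :: t) =
        listIntegral s ++ (s.sum + b) ::
          ((s.sum + (a + b)) :: (listIntegral t).map (fun z => s.sum + (a + (b + z)))) := by
      simp [listIntegral_append, listIntegral_cons, List.map_map, Function.comp]
      refine ⟨by ring, fun z _ => by ring⟩
    rw [hx, hy]
    exact listHam_single _ _ _ _

theorem code_corrects_single_deletion_or_transposition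
    (n : ℕ) (C : Set (List (ZMod 2)))
    (hlen : ∀ x ∈ C, x.length = n)
    (hdel : ∀ x ∈ C, ∀ u ∈ C, x ≠ u → delBall x ∩ delBall u = ∅)
    (hham : ∀ x ∈ C, ∀ u ∈ C, x ≠ u → 3 ≤ listHam (listIntegral x) (listIntegral u)) :
    ∀ x ∈ C, ∀ u ∈ C, x ≠ u →
      (delBall x ∪ oneT x) ∩ (delBall u ∪ oneT u) = ∅ := by
  intro x hx u hu hxu
  rw [Set.eq_empty_iff_forall_notMem]
  rintro y ⟨h1 | h1, h2 | h2⟩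
  · have := hdel x hx u hu hxu
    rw [Set.eq_empty_iff_forall_notMem] at this
    exact this y ⟨h1, h2⟩
  · -- y ∈ delBall x, y ∈ oneT u
    rcases h1 with rfl | ⟨i, hi, rfl⟩
    · have h3 := oneT_ham h2
      have h4 := hham u hu y hx (fun e => hxu e.symm)
      omega
    · have hl := oneT_length h2
      have he := List.length_eraseIdx_add_one hi
      have hxn := hlen x hx
      have hun := hlen u hu
      omega
  · -- y ∈ oneT x, y ∈ delBall u
    rcases h2 with rfl | ⟨i, hi, rfl⟩
    · have h3 := oneT_ham h1
      have h4 := hham x hx y hu hxu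
      omega
    · have hl := oneT_length h1
      have he := List.length_eraseIdx_add_one hi
      have hxn := hlen x hx
      have hun := hlen u hu
      omega
  · -- both oneT
    have h3 := oneT_ham h1
    have h4 := oneT_ham h2
    have h5 := hham x hx u hu hxu
    have e1 : (listIntegral x).length = (listIntegral y).length := by
      rw [listIntegral_length, listIntegral_length, oneT_length h1]
    have e2 : (listIntegral y).length = (listIntegral u).length := by
      rw [listIntegral_length, listIntegral_length, oneT_length h1,
        hlen x hx, hlen u hu]
    have := listHam_tri (listIntegral x) (listIntegral y) (listIntegral u) e1 e2
    rw [listHam_comm (listIntegral y) (listIntegral u)] at this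
    omega
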